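/- For any point pencil Q* and any complete pencil β, it is contradictory that Q* ∩ β is empty. -/

import Mathlib

/-- An incidence plane: points, lines, and an incidence relation. -/
structure IncidencePlane where
  Point : Type
  Line : Type
  mem : Point → Line → Prop

namespace IncidencePlane

variable (G : IncidencePlane)

/-- Lines `l` and `m` intersect: they are distinct and have a common point. -/
def Intersect (l m : G.Line) : Prop := l ≠ m ∧ ∃ Q, G.mem Q l ∧ G.mem Q m

/-- Parallel is the negation of intersecting. -/
def Par (l m : G.Line) : Prop := ¬ G.Intersect l m

/-- The point set of a line. -/
def lineSet (l : G.Line) : Set G.Point := {Q | G.mem Q l}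

/-- The pencil of all lines through a point `Q`, written `Q*`. -/
def pointPencil (Q : G.Point) : Set G.Line := {l | G.mem Q l}

/-- The pencil of all lines parallel to `l`, written `l*`. -/
def parPencil (l : G.Line) : Set G.Line := {m | G.Par m l}

/-- A regular pencil has the form `Q*` or `l*`. -/
def Regular (ρ : Set G.Line) : Prop :=
  (∃ Q, ρ = G.pointPencil Q) ∨ (∃ l, ρ = G.parPencil l)

/-- A pencil: (1) it cannot contain fewer than two lines; (2) two distinct
lines of it lying in a regular pencil `ρ` force inclusion in `ρ`. -/
def IsPencil (α : Set G.Line) : Prop :=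
  (¬ ∀ l ∈ α, ∀ m ∈ α, l = m) ∧
  (∀ ρ : Set G.Line, G.Regular ρ → ∀ l ∈ α, ∀ m ∈ α, l ≠ m → l ∈ ρ → m ∈ ρ → α ⊆ ρ)

/-- A complete pencil: two distinct lines of it in a regular pencil `ρ` force equality with `ρ`. -/
def Complete (α : Set G.Line) : Prop :=
  ∀ ρ : Set G.Line, G.Regular ρ → ∀ l ∈ α, ∀ m ∈ α, l ≠ m → l ∈ ρ → m ∈ ρ → α = ρ

/-- A strictly complete pencil: contained in a regular pencil implies equal to it. -/
def StrictlyComplete (α : Set G.Line) : Prop :=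
  ∀ ρ : Set G.Line, G.Regular ρ → α ⊆ ρ → α = ρ

/-- `l` lies outside the family `α`: it differs from every line of `α`. -/
def LineOutside (l : G.Line) (α : Set G.Line) : Prop := ∀ m ∈ α, l ≠ m

/-- Pencils `α` and `β` are distinct: some line of one lies outside the other. -/
def PDistinct (α β : Set G.Line) : Prop :=
  (∃ l ∈ α, G.LineOutside l β) ∨ (∃ l ∈ β, G.LineOutside l α)

/-- Pencils are equivalent when they are contained in exactly the same regular pencils. -/
def PEquiv (α β : Set G.Line) : Prop :=
  ∀ ρ : Set G.Line, G.Regular ρ → (α ⊆ ρ ↔ β ⊆ ρ)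

/-- A parallel pencil: a pencil any two of whose lines are parallel. -/
def ParallelPencil (α : Set G.Line) : Prop :=
  G.IsPencil α ∧ ∀ l ∈ α, ∀ m ∈ α, G.Par l m

/-- Point `Q` lies outside line `l`: it differs from every point of `l`. -/
def PointOutside (Q : G.Point) (l : G.Line) : Prop := ∀ R, G.mem R l → Q ≠ R

/-- The union of all pencils equivalent to `α` (the full pencil `α'`). -/
def fullPencil (α : Set G.Line) : Set G.Line :=
  ⋃₀ {β | G.IsPencil β ∧ G.PEquiv β α}

/-- The core of two pencils: points lying on a common line of the two pencils. -/
def core (α β : Set G.Line) : Set G.Point :=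
  {Q | ∃ l, l ∈ α ∩ β ∧ G.mem Q l}

/-- A virtual line: a set of points which is a line whenever it is inhabited. -/
def VLine (p : Set G.Point) : Prop :=
  p.Nonempty → ∃ l : G.Line, p = G.lineSet l

/-- Distinctness of virtual lines. -/
def VDistinct (p q : Set G.Point) : Prop :=
  ¬ (p = q) ∧ ∀ l m : G.Line, p = G.lineSet l → q = G.lineSet m → l ≠ m

/-- Equivalence of virtual lines: the negation of distinctness. -/
def VEquiv (p q : Set G.Point) : Prop := ¬ G.VDistinct p q

/-- The union of all virtual lines equivalent to `p`. -/
def vfull (p : Set G.Point) : Set G.Point :=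
  ⋃₀ {q | G.VLine q ∧ G.VEquiv q p}

/-- The axioms of an incidence plane used in this paper. -/
structure Axioms (G : IncidencePlane) : Prop where
  join : ∀ Q R : G.Point, Q ≠ R → ∃ l, G.mem Q l ∧ G.mem R l
  join_unique : ∀ Q R : G.Point, Q ≠ R → ∀ l m : G.Line,
      G.mem Q l → G.mem R l → G.mem Q m → G.mem R m → l = m
  cross_unique : ∀ l m : G.Line, l ≠ m → ∀ Q R : G.Point,
      G.mem Q l → G.mem Q m → G.mem R l → G.mem R m → Q = R
  parPost : ∀ (Q : G.Point) (l : G.Line), ∃ n, G.mem Q n ∧ G.Par n l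
  parPost_unique : ∀ (Q : G.Point) (l : G.Line) (n n' : G.Line),
      G.mem Q n → G.Par n l → G.mem Q n' → G.Par n' l → n = n'
  par_int : ∀ n₁ n₂ l m : G.Line,
      G.Par n₁ l → G.Par n₂ m → G.Intersect l m → G.Intersect n₁ n₂
  not_pointOutside : ∀ (Q : G.Point) (l : G.Line), ¬ G.PointOutside Q l → G.mem Q l
  two_points : ∀ l : G.Line, ∃ Q R : G.Point, Q ≠ R ∧ G.mem Q l ∧ G.mem R l
  exists_intersecting : ∃ l m : G.Line, G.Intersect l m

end IncidencePlane

open IncidencePlane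

/-!
Two distinct lines of a complete pencil either meet at a point `R` or are parallel, so the
pencil is `R*` or `l*`: a complete pencil is regular. A regular pencil always meets `Q*`, by
joining `Q` to `R` or by drawing the parallel to `l` through `Q`.
-/

namespace IncidencePlane

variable {G : IncidencePlane}

theorem par_self (l : G.Line) : G.Par l l := fun h => h.1 rfl

theorem IsPencil.exists_ne {α : Set G.Line} (hα : G.IsPencil α) :
    ∃ l ∈ α, ∃ m ∈ α, l ≠ m := by
  by_contra! h
  exact hα.1 h

theorem Complete.regular {β : Set G.Line} (hc : G.Complete β) (hβ : G.IsPencil β) :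
    G.Regular β := by
  obtain ⟨l, hl, m, hm, hlm⟩ := hβ.exists_ne
  by_cases hmeet : ∃ R, G.mem R l ∧ G.mem R m
  · obtain ⟨R, hRl, hRm⟩ := hmeet
    exact Or.inl ⟨R, hc _ (Or.inl ⟨R, rfl⟩) l hl m hm hlm hRl hRm⟩
  · have hml : G.Par m l := fun ⟨_, S, hSm, hSl⟩ => hmeet ⟨S, hSl, hSm⟩
    exact Or.inr ⟨l, hc _ (Or.inr ⟨l, rfl⟩) l hl m hm hlm (par_self l) hml⟩

theorem Axioms.exists_mem (ax : G.Axioms) (Q : G.Point) : ∃ l, G.mem Q l := by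
  obtain ⟨l, -⟩ := ax.exists_intersecting
  obtain ⟨n, hQn, -⟩ := ax.parPost Q l
  exact ⟨n, hQn⟩

theorem Axioms.pointPencil_inter_pointPencil_nonempty (ax : G.Axioms) (Q R : G.Point) :
    (G.pointPencil Q ∩ G.pointPencil R).Nonempty := by
  by_cases hQR : Q = R
  · subst hQR
    obtain ⟨n, hQn⟩ := ax.exists_mem Q
    exact ⟨n, hQn, hQn⟩
  · obtain ⟨n, hQn, hRn⟩ := ax.join Q R hQR
    exact ⟨n, hQn, hRn⟩

theorem Axioms.pointPencil_inter_parPencil_nonempty (ax : G.Axioms) (Q : G.Point) (l : G.Line) :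
    (G.pointPencil Q ∩ G.parPencil l).Nonempty := by
  obtain ⟨n, hQn, hnl⟩ := ax.parPost Q l
  exact ⟨n, hQn, hnl⟩

theorem Axioms.pointPencil_inter_nonempty_of_regular (ax : G.Axioms) (Q : G.Point)
    {ρ : Set G.Line} (hρ : G.Regular ρ) : (G.pointPencil Q ∩ ρ).Nonempty := by
  rcases hρ with ⟨R, rfl⟩ | ⟨l, rfl⟩
  · exact ax.pointPencil_inter_pointPencil_nonempty Q R
  · exact ax.pointPencil_inter_parPencil_nonempty Q l

end IncidencePlane

/-- for a point pencil `Q*` and a complete pencil β, it is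
contradictory that `Q* ∩ β` is empty. -/
theorem pointPencil_meets_complete (G : IncidencePlane) (ax : G.Axioms)
    (Q : G.Point) (β : Set G.Line) (hβ : G.IsPencil β) (hc : G.Complete β) :
    ¬ (G.pointPencil Q ∩ β = ∅) :=
  (ax.pointPencil_inter_nonempty_of_regular Q (hc.regular hβ)).ne_empty
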